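/- Let A be a commutative algebra over a field F with an exhaustive increasing multiplicative filtration F_* bounded below, and let gr(A) be the associated graded algebra. If x_1, …, x_n are homogeneous elements of gr(A) (with x_i in filtration degree j_i) forming a regular sequence in gr(A), and x̃_1, …, x̃_n ∈ A are lifts with x̃_i ∈ F_{j_i} mapping to x_i in F_{j_i}/F_{j_i−1}, then x̃_1, …, x̃_n is a regular sequence in A. -/
import Mathlib

section Aux

variable {F : Type*} [Field F] {A : Type*} [CommRing A] [Algebra F A]
  (Filt : ℤ → Submodule F A) {N : ℕ} (x : Fin N → A) (j : Fin N → ℤ)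

/-- The `F`-span of products `x l * b` with `l < i` and `b` of filtration degree `k - j l`. -/
def Sp (i : ℕ) (k : ℤ) : Submodule F A :=
  Submodule.span F {y : A | ∃ l : Fin N, (l : ℕ) < i ∧ ∃ b ∈ Filt (k - j l), y = x l * b}

lemma Sp_mono (hmono : Monotone Filt) (i : ℕ) {k k' : ℤ} (h : k ≤ k') :
    Sp Filt x j i k ≤ Sp Filt x j i k' :=
  Submodule.span_mono fun y hy => by
    obtain ⟨l, hl, b, hb, hy⟩ := hy
    exact ⟨l, hl, b, hmono (by omega) hb, hy⟩

lemma Sp_le_succ (i : ℕ) (k : ℤ) : Sp Filt x j i k ≤ Sp Filt x j (i + 1) k :=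
  Submodule.span_mono fun y hy => by
    obtain ⟨l, hl, b, hb, hy⟩ := hy
    exact ⟨l, by omega, b, hb, hy⟩

lemma mul_mem_Sp (hmult : ∀ i j : ℤ, ∀ a ∈ Filt i, ∀ b ∈ Filt j, a * b ∈ Filt (i + j))
    {c : A} {e : ℤ} (hc : c ∈ Filt e) {i : ℕ} {k : ℤ} {z : A}
    (hz : z ∈ Sp Filt x j i k) : c * z ∈ Sp Filt x j i (k + e) := by
  induction hz using Submodule.span_induction with
  | mem y hy =>
    obtain ⟨l, hl, b, hb, rfl⟩ := hy
    refine Submodule.subset_span ⟨l, hl, c * b, ?_, by ring⟩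
    have h := hmult e (k - j l) c hc b hb
    have he : e + (k - j l) = k + e - j l := by ring
    rwa [he] at h
  | zero => simpa using Submodule.zero_mem _
  | add z₁ z₂ _ _ ih₁ ih₂ => simpa [mul_add] using Submodule.add_mem _ ih₁ ih₂
  | smul r z _ ih => simpa [mul_smul_comm] using Submodule.smul_mem _ r ih

variable (hmono : Monotone Filt)
  (hmult : ∀ i j : ℤ, ∀ a ∈ Filt i, ∀ b ∈ Filt j, a * b ∈ Filt (i + j))
  (hx : ∀ i, x i ∈ Filt (j i))
  (hreg : ∀ (i : Fin N) (m : ℤ) (a : A), a ∈ Filt m →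
      x i * a ∈
        Submodule.span F {y : A | ∃ l : Fin N, l < i ∧
            ∃ b ∈ Filt (m + j i - j l), y = x l * b} ⊔ Filt (m + j i - 1) →
      a ∈
        Submodule.span F {y : A | ∃ l : Fin N, l < i ∧
            ∃ b ∈ Filt (m - j l), y = x l * b} ⊔ Filt (m - 1))

include hmono hmult hx hreg

/-- Strictness of the partial graded ideal with respect to the filtration. -/
lemma Sp_strict :
    ∀ (i : ℕ), i ≤ N → ∀ (k : ℤ) (c : A), c ∈ Sp Filt x j i k → c ∈ Filt (k - 1) →
      c ∈ Sp Filt x j i (k - 1) := by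
  intro i
  induction i with
  | zero =>
    intro _ k c hc _
    have hle : Sp Filt x j (0 : ℕ) k ≤ ⊥ := Submodule.span_le.2 (by rintro y ⟨l, hl, _⟩; omega)
    have : c = 0 := by simpa using hle hc
    rw [this]; exact Submodule.zero_mem _
  | succ i ih =>
    intro hiN k c hc hcF
    have hiN' : i < N := hiN
    set ι : Fin N := ⟨i, hiN'⟩ with hι
    -- decompose c = x ι * b + c₀
    have hdec : Sp Filt x j (i + 1) k ≤
        (Filt (k - j ι)).map (LinearMap.mulLeft F (x ι)) ⊔ Sp Filt x j i k := by
      refine Submodule.span_le.2 ?_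
      rintro y ⟨l, hl, b, hb, rfl⟩
      rcases Nat.lt_succ_iff_lt_or_eq.1 hl with hl' | hl'
      · exact Submodule.mem_sup_right (Submodule.subset_span ⟨l, hl', b, hb, rfl⟩)
      · have : l = ι := Fin.ext hl'
        subst this
        exact Submodule.mem_sup_left ⟨b, hb, rfl⟩
    obtain ⟨y, hy, c₀, hc₀, hsum⟩ := Submodule.mem_sup.1 (hdec hc)
    obtain ⟨b, hb, rfl⟩ := hy
    simp only [LinearMap.mulLeft_apply] at hsum
    -- x ι * b = c - c₀ lies in Sp i k ⊔ Filt (k-1)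
    have hxb : x ι * b ∈ Sp Filt x j i k ⊔ Filt (k - 1) := by
      have h : x ι * b = c - c₀ := by rw [← hsum]; ring
      rw [h]
      exact Submodule.sub_mem _ (Submodule.mem_sup_right hcF) (Submodule.mem_sup_left hc₀)
    -- apply graded regularity to b
    have hbreg : b ∈ Sp Filt x j i (k - j ι) ⊔ Filt (k - j ι - 1) := by
      have e1 : k - j ι + j ι = k := by ring
      have h := hreg ι (k - j ι) b hb (by rw [e1]; exact hxb)
      exact h
    obtain ⟨s, hs, b', hb', hbsum⟩ := Submodule.mem_sup.1 hbreg
    -- c = x ι * s + x ι * b' + c₀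
    have hxs : x ι * s ∈ Sp Filt x j i k := by
      have h := mul_mem_Sp Filt x j hmult (hx ι) hs
      have e1 : k - j ι + j ι = k := by ring
      rwa [e1] at h
    have hxb'F : x ι * b' ∈ Filt (k - 1) := by
      have h := hmult (j ι) (k - j ι - 1) (x ι) (hx ι) b' hb'
      have e1 : j ι + (k - j ι - 1) = k - 1 := by ring
      rwa [e1] at h
    have hxb'Sp : x ι * b' ∈ Sp Filt x j (i + 1) (k - 1) := by
      refine Submodule.subset_span ⟨ι, Nat.lt_succ_self i, b', ?_, rfl⟩
      have e1 : k - j ι - 1 = k - 1 - j ι := by ring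
      rwa [e1] at hb'
    have hrest : c - x ι * b' ∈ Sp Filt x j i k := by
      have h : c - x ι * b' = x ι * s + c₀ := by
        rw [← hsum, ← hbsum]; ring
      rw [h]
      exact Submodule.add_mem _ hxs hc₀
    have hrestF : c - x ι * b' ∈ Filt (k - 1) := Submodule.sub_mem _ hcF hxb'F
    have hrest' : c - x ι * b' ∈ Sp Filt x j i (k - 1) :=
      ih (le_of_lt hiN') k _ hrest hrestF
    have : c = (c - x ι * b') + x ι * b' := by ring
    rw [this]
    exact Submodule.add_mem _ (Sp_le_succ Filt x j i (k - 1) hrest') hxb'Sp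

/-- Main descent lemma. -/
lemma Sp_main (hbdd : ∃ i₀ : ℤ, ∀ i < i₀, Filt i = ⊥) (i : ℕ) (hiN : i < N) :
    ∀ (k : ℤ) (a : A), a ∈ Filt k →
      x ⟨i, hiN⟩ * a ∈ Sp Filt x j i (k + j ⟨i, hiN⟩) → a ∈ Sp Filt x j i k := by
  obtain ⟨i₀, hi₀⟩ := hbdd
  set ι : Fin N := ⟨i, hiN⟩ with hι
  suffices H : ∀ (n : ℕ) (k : ℤ), k < i₀ + n → ∀ a : A, a ∈ Filt k →
      x ι * a ∈ Sp Filt x j i (k + j ι) → a ∈ Sp Filt x j i k by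
    intro k a ha hxa
    exact H (k + 1 - i₀).toNat k (by omega) a ha hxa
  intro n
  induction n with
  | zero =>
    intro k hk a ha _
    rw [hi₀ k (by omega)] at ha
    simp only [Submodule.mem_bot] at ha
    rw [ha]; exact Submodule.zero_mem _
  | succ n ihn =>
    intro k hk a ha hxa
    -- apply graded regularity to a
    have hareg : a ∈ Sp Filt x j i k ⊔ Filt (k - 1) :=
      hreg ι k a ha (Submodule.mem_sup_left hxa)
    obtain ⟨s, hs, a', ha', hasum⟩ := Submodule.mem_sup.1 hareg
    have hxs : x ι * s ∈ Sp Filt x j i (k + j ι) :=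
      mul_mem_Sp Filt x j hmult (hx ι) hs
    have hxa' : x ι * a' ∈ Sp Filt x j i (k + j ι) := by
      have h : x ι * a' = x ι * a - x ι * s := by rw [← hasum]; ring
      rw [h]
      exact Submodule.sub_mem _ hxa hxs
    have hxa'F : x ι * a' ∈ Filt (k + j ι - 1) := by
      have h := hmult (j ι) (k - 1) (x ι) (hx ι) a' ha'
      have e1 : j ι + (k - 1) = k + j ι - 1 := by ring
      rwa [e1] at h
    have hstrict := Sp_strict Filt x j hmono hmult hx hreg i (le_of_lt hiN)
      (k + j ι) _ hxa' hxa'F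
    have e2 : k + j ι - 1 = (k - 1) + j ι := by ring
    rw [e2] at hstrict
    have ha'Sp : a' ∈ Sp Filt x j i (k - 1) :=
      ihn (k - 1) (by omega) a' ha' hstrict
    rw [← hasum]
    exact Submodule.add_mem _ hs (Sp_mono Filt x j hmono i (by omega) ha'Sp)

end Aux

/-- Lifting regular sequences along a filtration (Lemma 4.14 / Eisenbud): let `A` be a
commutative algebra over a field `F` with an exhaustive, increasing, multiplicative filtration
bounded below. Given lifts `x i ∈ Filt (j i)` of homogeneous elements of the associated graded
algebra, if those graded elements form a regular sequence in `gr(A)` — expressed below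
filtration-wise: whenever `x i * a` lies in `Σ_{l<i} x l · Filt(m + j i − j l) + Filt(m + j i − 1)`
for `a ∈ Filt m`, then `a` lies in `Σ_{l<i} x l · Filt(m − j l) + Filt(m − 1)` — then
`x 0, …, x (N−1)` is a (weakly) regular sequence in `A`. -/
theorem stmt_2 {F : Type*} [Field F] {A : Type*} [CommRing A] [Algebra F A]
    (Filt : ℤ → Submodule F A)
    (hmono : Monotone Filt)
    (hmult : ∀ i j : ℤ, ∀ a ∈ Filt i, ∀ b ∈ Filt j, a * b ∈ Filt (i + j))
    (hexh : ∀ a : A, ∃ i : ℤ, a ∈ Filt i)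
    (hbdd : ∃ i₀ : ℤ, ∀ i < i₀, Filt i = ⊥)
    (N : ℕ) (x : Fin N → A) (j : Fin N → ℤ)
    (hx : ∀ i, x i ∈ Filt (j i))
    (hreg : ∀ (i : Fin N) (m : ℤ) (a : A), a ∈ Filt m →
      x i * a ∈
        Submodule.span F {y : A | ∃ l : Fin N, l < i ∧
            ∃ b ∈ Filt (m + j i - j l), y = x l * b} ⊔ Filt (m + j i - 1) →
      a ∈
        Submodule.span F {y : A | ∃ l : Fin N, l < i ∧
            ∃ b ∈ Filt (m - j l), y = x l * b} ⊔ Filt (m - 1)) :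
    RingTheory.Sequence.IsWeaklyRegular A (List.ofFn x) := by
  rw [RingTheory.Sequence.isWeaklyRegular_iff]
  intro i hi
  rw [List.length_ofFn] at hi
  set ι : Fin N := ⟨i, hi⟩ with hι
  -- identify the ideal
  have hset : {r : A | r ∈ (List.ofFn x).take i} = x '' {l : Fin N | (l : ℕ) < i} := by
    ext r
    simp only [Set.mem_setOf_eq, List.mem_take_iff_getElem, List.length_ofFn,
      List.getElem_take, List.getElem_ofFn, Set.mem_image, Set.mem_setOf_eq]
    constructor
    · rintro ⟨m, hm, rfl⟩
      exact ⟨⟨m, by omega⟩, show m < i by omega, rfl⟩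
    · rintro ⟨l, hl, rfl⟩
      exact ⟨(l : ℕ), Nat.lt_min.mpr ⟨hl, l.isLt⟩, rfl⟩
  have hJ : Ideal.ofList ((List.ofFn x).take i) =
      Ideal.span (x '' {l : Fin N | (l : ℕ) < i}) := by
    rw [show Ideal.ofList ((List.ofFn x).take i) =
      Ideal.span {r : A | r ∈ (List.ofFn x).take i} from rfl, hset]
  set J : Ideal A := Ideal.span (x '' {l : Fin N | (l : ℕ) < i}) with hJdef
  -- the key algebraic fact
  have key : ∀ a : A, x ι * a ∈ J → a ∈ J := by
    intro a hxa
    -- x ι * a lies in some Sp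
    have exSp : ∀ z ∈ J, ∃ d : ℤ, z ∈ Sp Filt x j i d := by
      intro z hz
      induction hz using Submodule.span_induction with
      | mem y hy =>
        obtain ⟨l, hl, rfl⟩ := hy
        obtain ⟨e, he⟩ := hexh 1
        refine ⟨j l + e, Submodule.subset_span ⟨l, hl, 1, ?_, (mul_one _).symm⟩⟩
        have e1 : j l + e - j l = e := by ring
        rwa [e1]
      | zero => exact ⟨0, Submodule.zero_mem _⟩
      | add z₁ z₂ _ _ ih₁ ih₂ =>
        obtain ⟨d₁, h₁⟩ := ih₁
        obtain ⟨d₂, h₂⟩ := ih₂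
        exact ⟨max d₁ d₂, Submodule.add_mem _
          (Sp_mono Filt x j hmono i (le_max_left _ _) h₁)
          (Sp_mono Filt x j hmono i (le_max_right _ _) h₂)⟩
      | smul r z _ ih =>
        obtain ⟨d, hd⟩ := ih
        obtain ⟨e, he⟩ := hexh r
        exact ⟨d + e, by simpa [smul_eq_mul] using mul_mem_Sp Filt x j hmult he hd⟩
    obtain ⟨d, hd⟩ := exSp _ hxa
    obtain ⟨k₁, hk₁⟩ := hexh a
    set k : ℤ := max k₁ (d - j ι) with hk
    have ha : a ∈ Filt k := hmono (le_max_left _ _) hk₁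
    have hxa' : x ι * a ∈ Sp Filt x j i (k + j ι) :=
      Sp_mono Filt x j hmono i (by omega) hd
    have := Sp_main Filt x j hmono hmult hx hreg hbdd i hi k a ha hxa'
    -- Sp i k ≤ J (as sets)
    have hle : Sp Filt x j i k ≤ J.restrictScalars F := by
      refine Submodule.span_le.2 ?_
      rintro y ⟨l, hl, b, hb, rfl⟩
      exact Ideal.mul_mem_right b J (Ideal.subset_span ⟨l, hl, rfl⟩)
    exact hle this
  -- translate to the quotient statement
  have hsm : (Ideal.ofList ((List.ofFn x).take i) • ⊤ : Submodule A A) = J := by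
    rw [hJ, smul_eq_mul, Ideal.mul_top]
  have hg : (List.ofFn x)[i] = x ι := by simp [hι]
  intro a b hab
  obtain ⟨a, rfl⟩ := Submodule.Quotient.mk_surjective _ a
  obtain ⟨b, rfl⟩ := Submodule.Quotient.mk_surjective _ b
  have h1 : (Submodule.Quotient.mk (x ι * a) :
      A ⧸ (Ideal.ofList ((List.ofFn x).take i) • ⊤ : Submodule A A)) =
      Submodule.Quotient.mk (x ι * b) := by
    simpa only [hg, ← Submodule.Quotient.mk_smul, smul_eq_mul] using hab
  have h2 := (Submodule.Quotient.eq _).1 h1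
  rw [hsm] at h2
  have h3 : x ι * (a - b) ∈ J := by rw [mul_sub]; exact h2
  rw [Submodule.Quotient.eq, hsm]
  exact key (a - b) h3
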